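/- Let D > 0, t > 0, S > 0 and ρ ≥ 0 be real numbers. Then ∫₀^S r · exp(-r²/(4Dt)) · (∑_{k=0}^∞ ((ρ·r)/(4Dt))^{2k} / (k!)²) dr = 2Dt · ∑_{k=0}^∞ (ρ²/(4Dt))^k / (k!)² · γ(k+1, S²/(4Dt)); in particular, the series under the integral may be integrated term by term over [0, S]. -/

import Mathlib

/-! The substitution `y = r² / c` turns the `k`-th term of the series into `(c/2) γ(k+1, S²/c)`,
and on `[0, S]` the `k`-th term of the Bessel series is bounded by `(ρS/c)^{2k} / (k!)²`, which is
summable, so dominated convergence lets the series be integrated term by term. -/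

open MeasureTheory Real

/-- The lower incomplete Gamma function `γ(a, x) = ∫₀ˣ y^(a-1) exp(-y) dy`. -/
noncomputable def lowerGamma (a x : ℝ) : ℝ := ∫ y in (0:ℝ)..x, y^(a-1) * Real.exp (-y)

open scoped Nat

theorem lowerGamma_natCast_add_one (k : ℕ) (x : ℝ) :
    lowerGamma (k + 1) x = ∫ y in (0:ℝ)..x, y ^ k * exp (-y) := by
  simp only [lowerGamma, add_sub_cancel_right, rpow_natCast]

theorem integral_mul_pow_sq_div_mul_exp (c S : ℝ) (hc : c ≠ 0) (k : ℕ) :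
    ∫ r in (0:ℝ)..S, r * (r ^ 2 / c) ^ k * exp (-(r ^ 2 / c)) =
      c / 2 * lowerGamma (k + 1) (S ^ 2 / c) := by
  have hsubst := intervalIntegral.integral_comp_mul_deriv (a := 0) (b := S)
    (f := fun r => r ^ 2 / c) (f' := fun r => 2 * r / c) (g := fun y => y ^ k * exp (-y))
    (fun r _ => by simpa [mul_comm] using (hasDerivAt_pow 2 r).div_const c)
    (by fun_prop) (by fun_prop)
  simp only [Function.comp_def, ne_eq, OfNat.ofNat_ne_zero, not_false_eq_true, zero_pow,
    zero_div] at hsubst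
  rw [lowerGamma_natCast_add_one, ← hsubst, ← intervalIntegral.integral_const_mul]
  congr 1 with r
  field_simp

theorem summable_pow_div_factorial_sq (x : ℝ) : Summable fun k : ℕ => x ^ k / (k ! : ℝ) ^ 2 := by
  refine (summable_pow_div_factorial |x|).of_norm_bounded fun k => ?_
  have hk : (1 : ℝ) ≤ k ! := by exact_mod_cast k.factorial_pos
  rw [norm_div, norm_pow, norm_pow, Real.norm_eq_abs, Real.norm_natCast]
  gcongr
  nlinarith

theorem hasSum_intervalIntegral_mul_tsum {g : ℝ → ℝ} {f : ℕ → ℝ → ℝ} {M : ℕ → ℝ} {a b : ℝ}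
    (hg : IntervalIntegrable g volume a b) (hf : ∀ k, Continuous (f k))
    (hfM : ∀ k, ∀ r ∈ Set.uIoc a b, ‖f k r‖ ≤ M k) (hM : Summable M) :
    HasSum (fun k => ∫ r in a..b, g r * f k r) (∫ r in a..b, g r * ∑' k, f k r) := by
  refine intervalIntegral.hasSum_integral_of_dominated_convergence (fun k r => |g r| * M k)
    (fun k => hg.def'.aestronglyMeasurable.mul (hf k).aestronglyMeasurable)
    (fun k => ae_of_all _ fun r hr => ?_) (ae_of_all _ fun r _ => hM.mul_left _) ?_
    (ae_of_all _ fun r hr => ?_)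
  · rw [norm_mul, Real.norm_eq_abs]
    exact mul_le_mul_of_nonneg_left (hfM k r hr) (abs_nonneg _)
  · simp_rw [tsum_mul_left]
    exact hg.abs.mul_const _
  · exact ((hM.of_norm_bounded fun k => hfM k r hr).hasSum).mul_left (g r)

theorem norm_mul_div_pow_le_of_mem_uIoc {ρ c S r : ℝ} (hr : r ∈ Set.uIoc 0 S) (k : ℕ) :
    ‖(ρ * r / c) ^ (2 * k) / (k ! : ℝ) ^ 2‖ ≤ ((ρ * S / c) ^ 2) ^ k / (k ! : ℝ) ^ 2 := by
  have hrS : |r| ≤ |S| := by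
    simpa using Set.abs_sub_left_of_mem_uIcc (Set.uIoc_subset_uIcc hr)
  have hsq : (ρ * r / c) ^ 2 ≤ (ρ * S / c) ^ 2 := by
    simp only [div_pow, mul_pow]
    exact div_le_div_of_nonneg_right (mul_le_mul_of_nonneg_left (sq_le_sq.mpr hrS) (sq_nonneg ρ))
      (sq_nonneg c)
  rw [norm_div, norm_pow, norm_pow, Real.norm_natCast, Real.norm_eq_abs, pow_mul, sq_abs]
  gcongr

theorem radial_integral_series_general (D t S ρ : ℝ)
    (hD : 0 < D) (ht : 0 < t) :
    (∫ r in (0:ℝ)..S,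
        r * Real.exp (-(r^2 / (4*D*t))) *
          ∑' k : ℕ, ((ρ*r) / (4*D*t))^(2*k) / ((Nat.factorial k : ℝ))^2) =
      2*D*t * ∑' k : ℕ, (ρ^2 / (4*D*t))^k / ((Nat.factorial k : ℝ))^2
          * lowerGamma (k+1) (S^2 / (4*D*t)) := by
  set c := 4 * D * t
  have hc : c ≠ 0 := by positivity
  have hterm : ∀ k : ℕ, (∫ r in (0:ℝ)..S, r * exp (-(r ^ 2 / c)) *
      ((ρ * r / c) ^ (2 * k) / (k ! : ℝ) ^ 2)) =
      2 * D * t * ((ρ ^ 2 / c) ^ k / (k ! : ℝ) ^ 2 * lowerGamma (k + 1) (S ^ 2 / c)) := by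
    intro k
    have hsplit : ∀ r : ℝ, r * exp (-(r ^ 2 / c)) * ((ρ * r / c) ^ (2 * k) / (k ! : ℝ) ^ 2) =
        (ρ ^ 2 / c) ^ k / (k ! : ℝ) ^ 2 * (r * (r ^ 2 / c) ^ k * exp (-(r ^ 2 / c))) := fun r => by
      rw [pow_mul, show (ρ * r / c) ^ 2 = ρ ^ 2 / c * (r ^ 2 / c) by ring, mul_pow]
      ring
    simp_rw [hsplit, intervalIntegral.integral_const_mul, integral_mul_pow_sq_div_mul_exp _ _ hc]
    ring
  rw [← tsum_mul_left, ← tsum_congr hterm]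
  refine (hasSum_intervalIntegral_mul_tsum (Continuous.intervalIntegrable (by fun_prop) _ _)
    (fun k => by fun_prop) (fun k r hr => norm_mul_div_pow_le_of_mem_uIoc hr k)
    (summable_pow_div_factorial_sq _)).tsum_eq.symm

/-- Radial integration step in Appendix A: the Bessel series under the integral may be
integrated term by term, yielding
`∫₀^S r exp(-r²/(4Dt)) ∑_k ((ρr)/(4Dt))^{2k}/(k!)² dr
  = 2Dt ∑_k (ρ²/(4Dt))^k/(k!)² γ(k+1, S²/(4Dt))`. -/
theorem radial_integral_series (D t S ρ : ℝ)
    (hD : 0 < D) (ht : 0 < t) (hS : 0 < S) (hρ : 0 ≤ ρ) :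
    (∫ r in (0:ℝ)..S,
        r * Real.exp (-(r^2 / (4*D*t))) *
          ∑' k : ℕ, ((ρ*r) / (4*D*t))^(2*k) / ((Nat.factorial k : ℝ))^2) =
      2*D*t * ∑' k : ℕ, (ρ^2 / (4*D*t))^k / ((Nat.factorial k : ℝ))^2
          * lowerGamma (k+1) (S^2 / (4*D*t)) :=
  radial_integral_series_general D t S ρ hD ht
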